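/- Let n ≥ 2 and 1 ≤ p, q ≤ ∞, and suppose the bilinear Kakeya estimate K*(q′ × q′ → p′/2) holds for all 0 < δ < 1. Then necessarily p ≤ n and (n−2)/q + 2/p ≥ 1. -/

import Mathlib

open MeasureTheory Metric Set Function
open scoped ENNReal RealInnerProductSpace BigOperators NNReal

noncomputable section

/-- `ℝ^m` as a Euclidean space. -/
abbrev Em (m : ℕ) : Type := EuclideanSpace ℝ (Fin m)

/-- The cube `Q = [-1,1]^m`. -/
def cube (m : ℕ) : Set (Em m) := {x | ∀ i, |x i| ≤ 1}

/-- The closed cube with center `a` and sidelength `s`. -/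
def subcube {m : ℕ} (a : Em m) (s : ℝ) : Set (Em m) := {x | ∀ i, |x i - a i| ≤ s / 2}

/-- `Q₁, Q₂` are subcubes of the unit cube whose sidelengths and mutual distance are
bounded below by `c` (upper bounds being automatic from containment in `Q`). -/
def SeparatedCubes {m : ℕ} (c : ℝ) (Q₁ Q₂ : Set (Em m)) : Prop :=
  (∃ a s, c ≤ s ∧ Q₁ = subcube a s) ∧ (∃ a s, c ≤ s ∧ Q₂ = subcube a s) ∧
    Q₁ ⊆ cube m ∧ Q₂ ⊆ cube m ∧ ∀ x ∈ Q₁, ∀ y ∈ Q₂, c ≤ dist x y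

/-- Elliptic phase with constant `A`: `C^N` with all derivatives of order `≤ N` bounded by `A`
on `Q`, vanishing to first order at `0`, and with Hessian eigenvalues in `[1-ε₀, 1+ε₀]`
(expressed through the quadratic form of the second derivative). -/
def IsEllipticPhase {m : ℕ} (A : ℝ) (N : ℕ) (ε₀ : ℝ) (Φ : Em m → ℝ) : Prop :=
  ContDiff ℝ (N : ℕ∞) Φ ∧
    (∀ k : ℕ, k ≤ N → ∀ x ∈ cube m, ‖iteratedFDeriv ℝ k Φ x‖ ≤ A) ∧
    Φ 0 = 0 ∧ fderiv ℝ Φ 0 = 0 ∧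
    ∀ x ∈ cube m, ∀ v : Em m,
      (1 - ε₀) * ‖v‖ ^ 2 ≤ iteratedFDeriv ℝ 2 Φ x ![v, v] ∧
        iteratedFDeriv ℝ 2 Φ x ![v, v] ≤ (1 + ε₀) * ‖v‖ ^ 2

/-- The adjoint restriction operator associated to the phase `Φ`. -/
def Rstar {m : ℕ} (Φ : Em m → ℝ) (f : Em m → ℂ) : Em m × ℝ → ℂ := fun x =>
  ∫ y in cube m,
    Complex.exp ((-2 : ℂ) * (Real.pi : ℂ) * Complex.I * ((⟪x.1, y⟫ + x.2 * Φ y : ℝ) : ℂ))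
      * f y

/-- The linear adjoint restriction estimate `R*(p → q)` for the class of elliptic phases
with parameters `N`, `ε₀`, in `ℝ^(m+1)`. -/
def RLin (m N : ℕ) (ε₀ p q : ℝ) : Prop :=
  ∀ A > (0 : ℝ), ∃ C > (0 : ℝ), ∀ Φ : Em m → ℝ, IsEllipticPhase A N ε₀ Φ →
    ∀ f : Em m → ℂ, Function.support f ⊆ cube m →
      eLpNorm (Rstar Φ f) (ENNReal.ofReal q) volume ≤
        ENNReal.ofReal C * eLpNorm f (ENNReal.ofReal p) volume

/-- The bilinear adjoint restriction estimate `R*(p₁ × p₂ → q)` for the class of elliptic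
phases with parameters `N`, `ε₀`: here `f` is supported on `Q₁` and measured in `L^{p₂}`,
and `g` is supported on `Q₂` and measured in `L^{p₁}`. -/
def RBil (m N : ℕ) (ε₀ p₁ p₂ q : ℝ) : Prop :=
  ∀ c > (0 : ℝ), ∀ A > (0 : ℝ), ∃ C > (0 : ℝ), ∀ Φ : Em m → ℝ, IsEllipticPhase A N ε₀ Φ →
    ∀ Q₁ Q₂ : Set (Em m), SeparatedCubes c Q₁ Q₂ →
    ∀ f g : Em m → ℂ, Function.support f ⊆ Q₁ → Function.support g ⊆ Q₂ →
      eLpNorm (fun x => Rstar Φ f x * Rstar Φ g x) (ENNReal.ofReal q) volume ≤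
        ENNReal.ofReal C *
          (eLpNorm f (ENNReal.ofReal p₂) volume * eLpNorm g (ENNReal.ofReal p₁) volume)

/-- The (closed) Euclidean ball of radius `R` centered at `z` in `ℝ^m × ℝ ≃ ℝ^{m+1}`. -/
def eball {m : ℕ} (z : Em m × ℝ) (R : ℝ) : Set (Em m × ℝ) :=
  {y | ‖y.1 - z.1‖ ^ 2 + (y.2 - z.2) ^ 2 ≤ R ^ 2}

/-- The local bilinear adjoint restriction estimate `R*(p × p → q, α)`. -/
def RBilLoc (m N : ℕ) (ε₀ p q α : ℝ) : Prop :=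
  ∀ c > (0 : ℝ), ∀ A > (0 : ℝ), ∃ C > (0 : ℝ), ∀ Φ : Em m → ℝ, IsEllipticPhase A N ε₀ Φ →
    ∀ R : ℝ, 1 ≤ R → ∀ z : Em m × ℝ,
    ∀ Q₁ Q₂ : Set (Em m), SeparatedCubes c Q₁ Q₂ →
    ∀ f g : Em m → ℂ, Function.support f ⊆ Q₁ → Function.support g ⊆ Q₂ →
      eLpNorm (fun x => Rstar Φ f x * Rstar Φ g x) (ENNReal.ofReal q)
          (volume.restrict (eball z R)) ≤
        ENNReal.ofReal (C * R ^ α) *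
          (eLpNorm f (ENNReal.ofReal p) volume * eLpNorm g (ENNReal.ofReal p) volume)

/-- Fourier transform on `ℝ^m × ℝ ≃ ℝ^{m+1}`. -/
def ftP {m : ℕ} (f : Em m × ℝ → ℂ) (ξ : Em m × ℝ) : ℂ :=
  ∫ x : Em m × ℝ,
    Complex.exp ((-2 : ℂ) * (Real.pi : ℂ) * Complex.I * ((⟪x.1, ξ.1⟫ + x.2 * ξ.2 : ℝ) : ℂ))
      * f x

/-- The slab `A^R = {(x̄, Φ(x̄) + t) : x̄ ∈ Q', |t| ≤ C₀/R}` over a subcube `Q'`. -/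
def slab {m : ℕ} (Φ : Em m → ℝ) (Q' : Set (Em m)) (C₀ R : ℝ) : Set (Em m × ℝ) :=
  {z | z.1 ∈ Q' ∧ |z.2 - Φ z.1| ≤ C₀ / R}

/-- `E` is a `δ`-net of the cube `[-1,1]^m`. -/
def IsDeltaNet {m : ℕ} (δ : ℝ) (E : Finset (Em m)) : Prop :=
  (↑E ⊆ cube m) ∧ (∀ x ∈ cube m, ∃ e ∈ E, dist x e ≤ δ) ∧
    ∀ e₁ ∈ E, ∀ e₂ ∈ E, e₁ ≠ e₂ → δ ≤ dist e₁ e₂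

/-- The `δ × 1` tube with direction `ω` and base `i`. -/
def tube {m : ℕ} (δ : ℝ) (ω i : Em m) : Set (Em m × ℝ) :=
  {y | |y.2| ≤ 1 ∧ ‖y.1 - y.2 • ω - i‖ ≤ δ}

/-- The discretized X-ray transform `Xf(ω,i) = δ^{1-n} ∫_{T_ω^i} f`. -/
def Xray {m : ℕ} (δ : ℝ) (f : Em m × ℝ → ℝ) (ω i : Em m) : ℝ :=
  δ ^ (-(m : ℝ)) * ∫ x in tube δ ω i, f x

/-- The adjoint X-ray transform `X*g = Σ_ω Σ_i g(ω,i) χ_{T_ω^i}`. -/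
def Xstar {m : ℕ} (δ : ℝ) (E : Finset (Em m)) (g : Em m × Em m → ℝ) : Em m × ℝ → ℝ :=
  fun x => ∑ ω ∈ E, ∑ i ∈ E, g (ω, i) * Set.indicator (tube δ ω i) (fun _ => (1 : ℝ)) x

/-- The mixed norm `‖g‖_{L^a_ω L^1_i}` with respect to `dω = δ^{n-1} di` in `ω` and counting
measure `di` in `i`. -/
def mixedNorm {m : ℕ} (E : Finset (Em m)) (δ a : ℝ) (g : Em m × Em m → ℝ) : ℝ :=
  (∑ ω ∈ E, δ ^ (m : ℝ) * (∑ i ∈ E, g (ω, i)) ^ a) ^ (1 / a)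

/-- The mixed norm `‖Xf‖_{L^q_ω L^∞_i}`. -/
def xrayNorm {m : ℕ} (E : Finset (Em m)) (δ q : ℝ) (f : Em m × ℝ → ℝ) : ℝ :=
  (∑ ω ∈ E, δ ^ (m : ℝ) * (⨆ i ∈ E, Xray δ f ω i) ^ q) ^ (1 / q)

/-- The Kakeya maximal estimate `K(p → q)` in `ℝ^{m+1}`. -/
def KLin (m : ℕ) (p q : ℝ) : Prop :=
  ∀ ε > (0 : ℝ), ∃ C > (0 : ℝ), ∀ δ : ℝ, 0 < δ → δ < 1 →
    ∀ E : Finset (Em m), IsDeltaNet δ E →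
    ∀ f : Em m × ℝ → ℝ, 0 ≤ f →
      ENNReal.ofReal (xrayNorm E δ q f) ≤
        ENNReal.ofReal (C * δ ^ (-ε) * δ ^ (1 - ((m : ℝ) + 1) / p)) *
          eLpNorm f (ENNReal.ofReal p) volume

/-- The bilinear Kakeya estimate `K*(a × a → b)` in `ℝ^{m+1}`, with the factor
`δ^{2-2n+n/b}` where `n = m+1`. -/
def KBil (m : ℕ) (a b : ℝ) : Prop :=
  ∀ c > (0 : ℝ), ∀ ε > (0 : ℝ), ∃ C > (0 : ℝ), ∀ δ : ℝ, 0 < δ → δ < 1 →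
    ∀ E : Finset (Em m), IsDeltaNet δ E →
    ∀ E₁ E₂ : Finset (Em m), E₁ ⊆ E → E₂ ⊆ E →
      (∀ x ∈ E₁, ∀ y ∈ E₂, c ≤ dist x y) →
    ∀ f g : Em m × Em m → ℝ, 0 ≤ f → 0 ≤ g →
      (∀ ω i, f (ω, i) ≠ 0 → ω ∈ E₁ ∧ i ∈ E) →
      (∀ ω i, g (ω, i) ≠ 0 → ω ∈ E₂ ∧ i ∈ E) →
      eLpNorm (fun x => Xstar δ E f x * Xstar δ E g x) (ENNReal.ofReal b) volume ≤
        ENNReal.ofReal (C * δ ^ (-ε) * δ ^ (2 - 2 * ((m : ℝ) + 1) + ((m : ℝ) + 1) / b) *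
          mixedNorm E δ a f * mixedNorm E δ a g)

/-- Surface measure on the unit sphere `S^{n-1} ⊂ ℝ^n`, realized as the `(n-1)`-dimensional
Hausdorff measure restricted to the sphere. -/
def sphMeasure (n : ℕ) : Measure (Em n) :=
  (μH[(n : ℝ) - 1]).restrict (Metric.sphere (0 : Em n) 1)

/-- The Fourier transform `(f dσ)^` of the measure `f dσ` on the sphere. -/
def sphExt (n : ℕ) (f : Em n → ℂ) : Em n → ℂ := fun x =>
  ∫ ξ, Complex.exp ((-2 : ℂ) * (Real.pi : ℂ) * Complex.I * ((⟪x, ξ⟫ : ℝ) : ℂ)) * f ξ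
    ∂(sphMeasure n)

/-- Dyadic subcube of sidelength `2^{-j}` with index `k ∈ ℤ^m`. -/
def dyadicCube (m : ℕ) (j : ℕ) (k : Fin m → ℤ) : Set (Em m) :=
  {x | ∀ i, (k i : ℝ) * (2 : ℝ)⁻¹ ^ j ≤ x i ∧ x i < ((k i : ℝ) + 1) * (2 : ℝ)⁻¹ ^ j}

/-- Two dyadic cubes of the same sidelength are close if they are not adjacent but their
dyadic parents are adjacent. -/
def closeIdx {m : ℕ} (k k' : Fin m → ℤ) : Prop :=
  (¬ ∀ i, |k i - k' i| ≤ 1) ∧ ∀ i, |Int.fdiv (k i) 2 - Int.fdiv (k' i) 2| ≤ 1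

/-- The (closed) rectangle `∏_i [l i, u i]` in `ℝ^n`, with possibly infinite endpoints. -/
def rect (n : ℕ) (l u : Fin n → EReal) : Set (Em n) :=
  {x | ∀ i, l i ≤ (x i : EReal) ∧ (x i : EReal) ≤ u i}

/-- The dilate `2R` of the rectangle `∏_i [l i, u i]`: same center, twice the side lengths
(coordinatewise `[(3l-u)/2, (3u-l)/2]`, written without division). -/
def rect2 (n : ℕ) (l u : Fin n → EReal) : Set (Em n) :=
  {x | ∀ i, 3 * l i - u i ≤ 2 * (x i : EReal) ∧ 2 * (x i : EReal) ≤ 3 * u i - l i}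

end

open scoped Classical

noncomputable section

namespace Nec

lemma coord_le_dist {m : ℕ} (x y : Em m) (i : Fin m) : |x i - y i| ≤ dist x y := by
  rw [EuclideanSpace.dist_eq]
  have h1 : |x i - y i| = Real.sqrt ((x i - y i) ^ 2) := (Real.sqrt_sq_eq_abs _).symm
  rw [h1]
  apply Real.sqrt_le_sqrt
  have := Finset.single_le_sum (f := fun j => dist (x j) (y j) ^ 2)
    (fun j _ => sq_nonneg _) (Finset.mem_univ i)
  simpa [Real.dist_eq, sq_abs] using this

lemma dist_le_coord {m : ℕ} (x y : Em m) (r : ℝ) (hr : 0 ≤ r)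
    (h : ∀ i, |x i - y i| ≤ r) : dist x y ≤ Real.sqrt m * r := by
  rw [EuclideanSpace.dist_eq]
  have h1 : ∑ i, dist (x i) (y i) ^ 2 ≤ (m : ℝ) * r ^ 2 := by
    calc ∑ i, dist (x i) (y i) ^ 2 ≤ ∑ _i : Fin m, r ^ 2 := by
          apply Finset.sum_le_sum
          intro i _
          have := h i
          rw [Real.dist_eq]
          exact pow_le_pow_left₀ (abs_nonneg _) this 2
      _ = (m : ℝ) * r ^ 2 := by simp [mul_comm]
  calc Real.sqrt (∑ i, dist (x i) (y i) ^ 2) ≤ Real.sqrt ((m : ℝ) * r ^ 2) :=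
        Real.sqrt_le_sqrt h1
    _ = Real.sqrt m * r := by
        rw [Real.sqrt_mul (Nat.cast_nonneg m), Real.sqrt_sq hr]

/-- Packing lemma: a `δ`-separated set inside a box has controlled cardinality. -/
lemma pack_card {m : ℕ} (hm : 1 ≤ m) (δ : ℝ) (hδ : 0 < δ) (F : Finset (Em m))
    (lo hi : Fin m → ℝ) (hlohi : ∀ i, lo i ≤ hi i)
    (hF : ∀ e ∈ F, ∀ i, lo i ≤ e i ∧ e i ≤ hi i)
    (hsep : ∀ e₁ ∈ F, ∀ e₂ ∈ F, e₁ ≠ e₂ → δ ≤ dist e₁ e₂) :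
    (F.card : ℝ) ≤ ∏ i, ((hi i - lo i) * (2 * Real.sqrt m) / δ + 1) := by
  classical
  have hsm : (1 : ℝ) ≤ Real.sqrt m := by
    rw [show (1:ℝ) = Real.sqrt 1 by simp]
    exact Real.sqrt_le_sqrt (by exact_mod_cast hm)
  have hs : (0 : ℝ) < 2 * Real.sqrt m / δ := by positivity
  set s : ℝ := 2 * Real.sqrt m / δ with hs_def
  set φ : Em m → (Fin m → ℤ) := fun e i => ⌊(e i - lo i) * s⌋ with hφ
  have hinj : Set.InjOn φ F := by
    intro e₁ h₁ e₂ h₂ heq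
    by_contra hne
    have hd : δ ≤ dist e₁ e₂ := hsep e₁ h₁ e₂ h₂ hne
    have hcoord : ∀ i, |e₁ i - e₂ i| ≤ δ / (2 * Real.sqrt m) := by
      intro i
      have hfe : ⌊(e₁ i - lo i) * s⌋ = ⌊(e₂ i - lo i) * s⌋ := congrFun heq i
      have h1 := Int.floor_le ((e₁ i - lo i) * s)
      have h2 := Int.lt_floor_add_one ((e₁ i - lo i) * s)
      have h3 := Int.floor_le ((e₂ i - lo i) * s)
      have h4 := Int.lt_floor_add_one ((e₂ i - lo i) * s)
      rw [hfe] at h1 h2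
      have habs : |(e₁ i - lo i) * s - (e₂ i - lo i) * s| < 1 := by
        rw [abs_sub_lt_iff]; constructor <;> linarith
      have : |e₁ i - e₂ i| * s < 1 := by
        have : (e₁ i - lo i) * s - (e₂ i - lo i) * s = (e₁ i - e₂ i) * s := by ring
        rw [this, abs_mul, abs_of_pos hs] at habs
        exact habs
      have hsm' : (0:ℝ) < 2 * Real.sqrt m := by positivity
      have hlt : |e₁ i - e₂ i| < 1 / s := (lt_div_iff₀ hs).mpr (by linarith)
      have h1s : 1 / s = δ / (2 * Real.sqrt m) := by
        rw [hs_def, one_div_div]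
      linarith [hlt, h1s.le, h1s.ge]
    have : dist e₁ e₂ ≤ Real.sqrt m * (δ / (2 * Real.sqrt m)) :=
      dist_le_coord _ _ _ (by positivity) hcoord
    have hsm' : (0:ℝ) < Real.sqrt m := by positivity
    have : dist e₁ e₂ ≤ δ / 2 := by
      rw [show Real.sqrt m * (δ / (2 * Real.sqrt m)) = δ / 2 * (Real.sqrt m / Real.sqrt m) by ring]
        at this
      rwa [div_self (ne_of_gt hsm'), mul_one] at this
    linarith
  have himg : F.card = (F.image φ).card := (Finset.card_image_of_injOn hinj).symm
  have hsub : F.image φ ⊆ Finset.Icc (fun _ => (0:ℤ)) (fun i => ⌊(hi i - lo i) * s⌋) := by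
    intro k hk
    obtain ⟨e, he, rfl⟩ := Finset.mem_image.mp hk
    rw [Finset.mem_Icc]
    constructor
    · intro i
      simp only [hφ]
      exact Int.le_floor.mpr (by
        simp only [Int.cast_zero]
        have := (hF e he i).1
        nlinarith [hs])
    · intro i
      simp only [hφ]
      apply Int.floor_le_floor
      have := (hF e he i).2
      nlinarith [hs]
  have hcard : (F.image φ).card ≤ (Finset.Icc (fun _ => (0:ℤ)) (fun i => ⌊(hi i - lo i) * s⌋)).card :=
    Finset.card_le_card hsub
  have hbound : ((∏ i, (Finset.Icc (0:ℤ) ⌊(hi i - lo i) * s⌋).card : ℕ) : ℝ) ≤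
      ∏ i, ((hi i - lo i) * (2 * Real.sqrt m) / δ + 1) := by
    push_cast
    apply Finset.prod_le_prod
    · intro i _; positivity
    · intro i _
      rw [Int.card_Icc]
      have hfl : (0:ℤ) ≤ ⌊(hi i - lo i) * s⌋ := Int.le_floor.mpr (by
        simp only [Int.cast_zero]
        nlinarith [hlohi i, hs])
      have h6 : (((⌊(hi i - lo i) * s⌋ + 1 - 0).toNat : ℕ) : ℝ)
          = (⌊(hi i - lo i) * s⌋ : ℝ) + 1 := by
        have h7 := Int.toNat_of_nonneg (a := ⌊(hi i - lo i) * s⌋ + 1 - 0) (by omega)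
        have h8 := congrArg (Int.cast : ℤ → ℝ) h7
        push_cast at h8 ⊢
        linarith [h8]
      rw [h6]
      have := Int.floor_le ((hi i - lo i) * s)
      have heq : (hi i - lo i) * (2 * Real.sqrt m) / δ = (hi i - lo i) * s := by
        rw [hs_def]; ring
      rw [heq]
      linarith
  rw [Pi.card_Icc] at hcard
  calc (F.card : ℝ) = ((F.image φ).card : ℝ) := by exact_mod_cast himg
    _ ≤ _ := by exact_mod_cast hcard
    _ ≤ _ := hbound



/-- Any `δ`-separated subset of the cube has cardinality at most the packing bound. -/
lemma sep_card_cube {m : ℕ} (hm : 1 ≤ m) (δ : ℝ) (hδ : 0 < δ) (F : Finset (Em m))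
    (hFc : ↑F ⊆ cube m)
    (hsep : ∀ e₁ ∈ F, ∀ e₂ ∈ F, e₁ ≠ e₂ → δ ≤ dist e₁ e₂) :
    (F.card : ℝ) ≤ ∏ _i : Fin m, (2 * (2 * Real.sqrt m) / δ + 1) := by
  have := pack_card hm δ hδ F (fun _ => -1) (fun _ => 1) (fun _ => by norm_num)
    (fun e he i => abs_le.mp (hFc he i)) hsep
  convert this using 2 with i
  norm_num

/-- Existence of a `δ`-net of the cube. -/
lemma exists_deltaNet {m : ℕ} (hm : 1 ≤ m) (δ : ℝ) (hδ : 0 < δ) :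
    ∃ E : Finset (Em m), IsDeltaNet δ E := by
  classical
  set P : Finset (Em m) → Prop := fun F => (↑F ⊆ cube m) ∧
    ∀ e₁ ∈ F, ∀ e₂ ∈ F, e₁ ≠ e₂ → δ ≤ dist e₁ e₂ with hP
  set S : Set ℕ := {k | ∃ F, P F ∧ F.card = k} with hS
  have hne : S.Nonempty := ⟨0, ∅, ⟨by simp [hP], by simp [hP]⟩, rfl⟩
  have hbdd : BddAbove S := by
    refine ⟨⌈∏ _i : Fin m, (2 * (2 * Real.sqrt m) / δ + 1)⌉₊, ?_⟩
    rintro k ⟨F, hF, rfl⟩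
    have := sep_card_cube hm δ hδ F hF.1 hF.2
    exact_mod_cast this.trans (Nat.le_ceil _)
  obtain ⟨F, hF, hcard⟩ := Nat.sSup_mem hne hbdd
  refine ⟨F, hF.1, ?_, hF.2⟩
  intro x hx
  by_contra hcov
  push_neg at hcov
  have hxF : x ∉ F := by
    intro hxF
    have := hcov x hxF
    simp only [dist_self] at this
    linarith
  have hP' : P (insert x F) := by
    constructor
    · intro y hy
      rcases Finset.mem_insert.mp (by exact_mod_cast hy) with rfl | hy'
      · exact hx
      · exact hF.1 hy'
    · intro e₁ h₁ e₂ h₂ hne'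
      rcases Finset.mem_insert.mp h₁ with rfl | h₁' <;>
        rcases Finset.mem_insert.mp h₂ with rfl | h₂'
      · exact absurd rfl hne'
      · exact le_of_lt (hcov e₂ h₂')
      · rw [dist_comm]; exact le_of_lt (hcov e₁ h₁')
      · exact hF.2 e₁ h₁' e₂ h₂' hne'
  have hmem : F.card + 1 ∈ S := ⟨insert x F, hP', by rw [Finset.card_insert_of_notMem hxF]⟩
  have := le_csSup hbdd hmem
  omega

/-- The number of indices `i : Fin m` with `↑i < d` is `d`. -/
lemma card_filter_lt {m d : ℕ} (hdm : d ≤ m) :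
    (Finset.univ.filter (fun i : Fin m => (i : ℕ) < d)).card = d := by
  classical
  rw [Finset.card_filter]
  rw [Fin.sum_univ_eq_sum_range (fun i => if i < d then 1 else 0)]
  rw [← Finset.card_filter]
  rw [Finset.range_eq_Ico, Finset.Ico_filter_lt_of_le_right hdm, Nat.card_Ico]
  omega



/-- Direction-set predicate: coordinates `< d` lie in `σ·[1/8,5/8]`, the rest are `≤ δ`. -/
def dirPred (m d : ℕ) (δ σ : ℝ) (e : Em m) : Prop :=
  ∀ i : Fin m, ((i : ℕ) < d → 1/8 ≤ σ * e i ∧ σ * e i ≤ 5/8) ∧ (d ≤ (i : ℕ) → |e i| ≤ δ)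

/-- Position-set predicate: coordinates `≥ d` are `≤ 3δ`. -/
def posPred (m d : ℕ) (δ : ℝ) (e : Em m) : Prop :=
  ∀ i : Fin m, d ≤ (i : ℕ) → |e i| ≤ 3 * δ

lemma sep_card_box {m d : ℕ} (hm : 1 ≤ m) (hdm : d ≤ m) {δ : ℝ} (hδ0 : 0 < δ) (hδ1 : δ ≤ 1)
    (F : Finset (Em m)) (lo hi : Fin m → ℝ) (hlh : ∀ i, lo i ≤ hi i)
    (h2 : ∀ i : Fin m, (i : ℕ) < d → hi i - lo i ≤ 2)
    (h6 : ∀ i : Fin m, d ≤ (i : ℕ) → hi i - lo i ≤ 6 * δ)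
    (hbox : ∀ e ∈ F, ∀ i, lo i ≤ e i ∧ e i ≤ hi i)
    (hsep : ∀ e₁ ∈ F, ∀ e₂ ∈ F, e₁ ≠ e₂ → δ ≤ dist e₁ e₂) :
    (F.card : ℝ) ≤ (13 * Real.sqrt m) ^ m * (δ⁻¹) ^ d := by
  classical
  have hsm : (1 : ℝ) ≤ Real.sqrt m := by
    rw [show (1:ℝ) = Real.sqrt 1 by simp]
    exact Real.sqrt_le_sqrt (by exact_mod_cast hm)
  have h := pack_card hm δ hδ0 F lo hi hlh hbox hsep
  refine h.trans ?_
  have hfac : ∀ i : Fin m, (hi i - lo i) * (2 * Real.sqrt m) / δ + 1 ≤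
      (13 * Real.sqrt m) * (if (i : ℕ) < d then δ⁻¹ else 1) := by
    intro i
    have hone : (1:ℝ) ≤ Real.sqrt m / δ := (one_le_div hδ0).mpr (hδ1.trans hsm)
    by_cases hid : (i : ℕ) < d
    · rw [if_pos hid]
      have hb := h2 i hid
      have : (hi i - lo i) * (2 * Real.sqrt m) / δ ≤ 2 * (2 * Real.sqrt m) / δ := by
        gcongr
      have h13 : 13 * Real.sqrt m * δ⁻¹ = 13 * (Real.sqrt m / δ) := by ring
      rw [h13]
      have h4 : 2 * (2 * Real.sqrt m) / δ = 4 * (Real.sqrt m / δ) := by ring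
      rw [h4] at this
      nlinarith
    · rw [if_neg hid]
      have hb := h6 i (le_of_not_gt hid)
      have : (hi i - lo i) * (2 * Real.sqrt m) / δ ≤ 6 * δ * (2 * Real.sqrt m) / δ := by
        gcongr
      have h12 : 6 * δ * (2 * Real.sqrt m) / δ = 12 * Real.sqrt m := by
        field_simp; ring
      rw [h12] at this
      nlinarith
  calc ∏ i, ((hi i - lo i) * (2 * Real.sqrt m) / δ + 1)
      ≤ ∏ i : Fin m, (13 * Real.sqrt m) * (if (i : ℕ) < d then δ⁻¹ else 1) := by
        apply Finset.prod_le_prod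
        · intro i _
          have h0 : (0:ℝ) ≤ hi i - lo i := by linarith [hlh i]
          positivity
        · exact fun i _ => hfac i
    _ = (13 * Real.sqrt m) ^ m * (δ⁻¹) ^ d := by
        rw [Finset.prod_mul_distrib, Finset.prod_const, Finset.prod_ite, Finset.prod_const,
          Finset.prod_const, one_pow, mul_one, card_filter_lt hdm, Finset.card_univ,
          Fintype.card_fin]

/-- Grid point used for the lower bound. -/
def gp (m d : ℕ) (δ σ : ℝ) (v : Fin d → ℕ) : Em m :=
  (WithLp.equiv 2 (Fin m → ℝ)).symm
    (fun i => if h : (i : ℕ) < d then σ * (1/4 + 3 * δ * (v ⟨i, h⟩)) else 0)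

lemma gp_apply (m d : ℕ) (δ σ : ℝ) (v : Fin d → ℕ) (i : Fin m) :
    gp m d δ σ v i = if h : (i : ℕ) < d then σ * (1/4 + 3 * δ * (v ⟨i, h⟩)) else 0 := rfl

lemma net_lower {m d : ℕ} (hd : 1 ≤ d) (hdm : d ≤ m) {δ : ℝ} (hδ0 : 0 < δ) (hδ : δ ≤ 1/12)
    {E : Finset (Em m)} (hE : IsDeltaNet δ E) (σ : ℝ) (hσ : σ = 1 ∨ σ = -1)
    [DecidablePred (dirPred m d δ σ)] :
    ((24 * δ)⁻¹) ^ d ≤ ((E.filter (dirPred m d δ σ)).card : ℝ) := by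
  classical
  have hσ1 : σ * σ = 1 := by rcases hσ with rfl | rfl <;> norm_num
  have hσa : |σ| = 1 := by rcases hσ with rfl | rfl <;> norm_num
  set K := ⌊1 / (12 * δ)⌋₊ with hK
  have hx1 : (1:ℝ) ≤ 1 / (12 * δ) := by
    rw [le_div_iff₀ (by positivity)]
    linarith
  have hK1 : 1 ≤ K := by
    rw [hK]
    exact Nat.le_floor (by exact_mod_cast hx1)
  have hKA : (K : ℝ) ≤ 1 / (12 * δ) := Nat.floor_le (by positivity)
  have hKB : (24 * δ)⁻¹ ≤ (K : ℝ) := by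
    rcases le_or_gt 2 (1 / (12 * δ)) with h2 | h2
    · have := Nat.sub_one_lt_floor (1 / (12 * δ))
      have hfl : 1 / (12 * δ) - 1 < (K : ℝ) := by exact_mod_cast this
      have : (24 * δ)⁻¹ = (1 / (12 * δ)) / 2 := by
        rw [inv_eq_one_div]; ring
      rw [this]
      linarith
    · have : (24 * δ)⁻¹ = (1 / (12 * δ)) / 2 := by rw [inv_eq_one_div]; ring
      rw [this]
      have : (1:ℝ) ≤ (K:ℝ) := by exact_mod_cast hK1
      linarith
  -- grid points lie in the cube
  have hcube : ∀ v : Fin d → Fin K, gp m d δ σ (fun j => v j) ∈ cube m := by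
    intro v i
    rw [gp_apply]
    split_ifs with h
    · have hv : ((v ⟨i, h⟩ : ℕ) : ℝ) ≤ (K : ℝ) - 1 := by
        have h' : (v ⟨i, h⟩ : ℕ) + 1 ≤ K := (v ⟨i, h⟩).2
        have h'' : ((v ⟨i, h⟩ : ℕ) : ℝ) + 1 ≤ (K : ℝ) := by exact_mod_cast h'
        linarith
      rw [abs_mul, hσa, one_mul]
      rw [abs_of_nonneg (by positivity)]
      have h3 : 3 * δ * ((v ⟨i, h⟩ : ℕ) : ℝ) ≤ 3 * δ * ((K:ℝ) - 1) := by nlinarith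
      have h4 : 3 * δ * (K:ℝ) ≤ 1/4 := by
        have := hKA
        calc 3 * δ * (K:ℝ) ≤ 3 * δ * (1 / (12 * δ)) := by nlinarith
          _ = 1/4 := by field_simp; ring
      nlinarith
    · simp
  have hcov := hE.2.1
  have hch : ∀ v : Fin d → Fin K, ∃ e ∈ E, dist (gp m d δ σ (fun j => v j)) e ≤ δ :=
    fun v => hcov _ (hcube v)
  choose Φ hΦE hΦd using hch
  -- each chosen point satisfies dirPred
  have hΦP : ∀ v, dirPred m d δ σ (Φ v) := by
    intro v i
    have hco := coord_le_dist (gp m d δ σ (fun j => v j)) (Φ v) i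
    have hco' : |gp m d δ σ (fun j => v j) i - Φ v i| ≤ δ := hco.trans (hΦd v)
    constructor
    · intro h
      rw [gp_apply, dif_pos h] at hco'
      have key : |σ * Φ v i - (1/4 + 3 * δ * ((v ⟨i, h⟩ : ℕ) : ℝ))| ≤ δ := by
        have : σ * Φ v i - (1/4 + 3 * δ * ((v ⟨i, h⟩ : ℕ) : ℝ))
            = -σ * (σ * (1/4 + 3 * δ * ((v ⟨i, h⟩ : ℕ) : ℝ)) - Φ v i) := by
          linear_combination ((1:ℝ)/4 + 3 * δ * ((v ⟨i, h⟩ : ℕ) : ℝ)) * hσ1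
        rw [this, abs_mul, abs_neg, hσa, one_mul]
        exact hco'
      rw [abs_le] at key
      have hv : ((v ⟨i, h⟩ : ℕ) : ℝ) ≤ (K : ℝ) - 1 := by
        have h' : (v ⟨i, h⟩ : ℕ) + 1 ≤ K := (v ⟨i, h⟩).2
        have : ((v ⟨i, h⟩ : ℕ) : ℝ) + 1 ≤ (K : ℝ) := by exact_mod_cast h'
        linarith
      have h4 : 3 * δ * (K:ℝ) ≤ 1/4 := by
        calc 3 * δ * (K:ℝ) ≤ 3 * δ * (1 / (12 * δ)) := by nlinarith
          _ = 1/4 := by field_simp; ring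
      constructor
      · have : (0:ℝ) ≤ 3 * δ * ((v ⟨i, h⟩ : ℕ) : ℝ) := by positivity
        linarith
      · nlinarith
    · intro h
      rw [gp_apply, dif_neg (by omega)] at hco'
      rw [zero_sub, abs_neg] at hco'
      exact hco'
  -- injectivity
  have hinj : Set.InjOn (fun v : Fin d → Fin K => Φ v) ↑(Finset.univ : Finset (Fin d → Fin K)) := by
    intro v _ w _ heq
    by_contra hne
    have : ∃ j : Fin d, v j ≠ w j := by
      by_contra hall
      push_neg at hall
      exact hne (funext hall)
    obtain ⟨j, hj⟩ := this
    set i : Fin m := ⟨(j : ℕ), lt_of_lt_of_le j.2 hdm⟩ with hi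
    have hij : (i : ℕ) < d := j.2
    have hvw : (1:ℝ) ≤ |((v j : ℕ) : ℝ) - ((w j : ℕ) : ℝ)| := by
      have hne' : (v j : ℕ) ≠ (w j : ℕ) := fun hc => hj (Fin.ext hc)
      have h1 : ((v j : ℕ) : ℤ) ≠ ((w j : ℕ) : ℤ) := by exact_mod_cast hne'
      have h2 : (1:ℤ) ≤ |((v j : ℕ) : ℤ) - ((w j : ℕ) : ℤ)| := by
        rcases abs_cases (((v j : ℕ) : ℤ) - ((w j : ℕ) : ℤ)) with ⟨he, _⟩ | ⟨he, _⟩ <;> omega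
      calc (1:ℝ) = ((1:ℤ):ℝ) := by norm_num
        _ ≤ ((|((v j : ℕ) : ℤ) - ((w j : ℕ) : ℤ)| : ℤ) : ℝ) := by exact_mod_cast h2
        _ = |((v j : ℕ) : ℝ) - ((w j : ℕ) : ℝ)| := by push_cast; ring_nf
    have hcoorddiff : |gp m d δ σ (fun a => v a) i - gp m d δ σ (fun a => w a) i| ≥ 3 * δ := by
      rw [gp_apply, gp_apply, dif_pos hij, dif_pos hij]
      have hfix : (⟨(i:ℕ), hij⟩ : Fin d) = j := by
        apply Fin.ext
        simp [hi]
      rw [hfix]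
      have : σ * (1/4 + 3 * δ * ((v j : ℕ):ℝ)) - σ * (1/4 + 3 * δ * ((w j : ℕ):ℝ))
          = σ * (3 * δ * (((v j : ℕ):ℝ) - ((w j : ℕ):ℝ))) := by ring
      rw [this, abs_mul, hσa, one_mul, abs_mul]
      rw [abs_of_nonneg (by positivity : (0:ℝ) ≤ 3 * δ)]
      nlinarith
    have hd1 : dist (gp m d δ σ (fun a => v a)) (gp m d δ σ (fun a => w a)) ≤ 2 * δ := by
      have h1 := hΦd v
      have h2 := hΦd w
      have heq' : Φ v = Φ w := heq
      calc dist (gp m d δ σ (fun a => v a)) (gp m d δ σ (fun a => w a))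
          ≤ dist (gp m d δ σ (fun a => v a)) (Φ v) + dist (Φ v) (gp m d δ σ (fun a => w a)) :=
            dist_triangle _ _ _
        _ ≤ δ + δ := by
            refine add_le_add h1 ?_
            rw [heq', dist_comm]
            exact h2
        _ = 2 * δ := by ring
    have := (coord_le_dist (gp m d δ σ (fun a => v a)) (gp m d δ σ (fun a => w a)) i).trans hd1
    linarith
  have hmaps : ∀ v : Fin d → Fin K, (v ∈ (Finset.univ : Finset (Fin d → Fin K))) →
      Φ v ∈ E.filter (dirPred m d δ σ) := by
    intro v _
    exact Finset.mem_filter.mpr ⟨hΦE v, hΦP v⟩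
  have hcard := Finset.card_le_card_of_injOn (fun v => Φ v) hmaps hinj
  rw [Finset.card_univ, Fintype.card_fun, Fintype.card_fin, Fintype.card_fin] at hcard
  calc ((24 * δ)⁻¹) ^ d ≤ ((K:ℝ)) ^ d := by
        apply pow_le_pow_left₀ (by positivity) hKB
    _ = ((K ^ d : ℕ) : ℝ) := by push_cast; ring
    _ ≤ _ := by exact_mod_cast hcard



/-- The spatial part of the test region. -/
def regB (m d : ℕ) (δ : ℝ) : Set (Em m) :=
  {x | ∀ i : Fin m, |x i| ≤ if (i : ℕ) < d then 1/4 else δ}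

/-- The test region in `ℝ^m × ℝ`. -/
def reg (m d : ℕ) (δ : ℝ) : Set (Em m × ℝ) :=
  regB m d δ ×ˢ Set.Icc (-(1/4) : ℝ) (1/4)

lemma regB_eq_preimage (m d : ℕ) (δ : ℝ) :
    regB m d δ = (MeasurableEquiv.toLp 2 (Fin m → ℝ)).symm ⁻¹'
      (Set.univ.pi fun i : Fin m =>
        Set.Icc (-(if (i : ℕ) < d then 1/4 else δ)) (if (i : ℕ) < d then 1/4 else δ)) := by
  ext x
  simp only [regB, Set.mem_setOf_eq, Set.mem_preimage, Set.mem_pi, Set.mem_univ, forall_true_left,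
    Set.mem_Icc, true_implies]
  constructor
  · intro h i
    have := abs_le.mp (h i)
    exact ⟨this.1, this.2⟩
  · intro h i
    exact abs_le.mpr ⟨(h i).1, (h i).2⟩

lemma measurable_regB (m d : ℕ) (δ : ℝ) : MeasurableSet (regB m d δ) := by
  rw [regB_eq_preimage]
  exact (MeasurableEquiv.toLp 2 (Fin m → ℝ)).symm.measurable
    (MeasurableSet.univ_pi fun i => measurableSet_Icc)

lemma measurable_reg (m d : ℕ) (δ : ℝ) : MeasurableSet (reg m d δ) :=
  (measurable_regB m d δ).prod measurableSet_Icc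

lemma volume_regB (m d : ℕ) (hdm : d ≤ m) {δ : ℝ} (hδ : 0 ≤ δ) :
    volume (regB m d δ) = ENNReal.ofReal ((1/2) ^ d * (2 * δ) ^ (m - d)) := by
  classical
  rw [regB_eq_preimage]
  rw [(EuclideanSpace.volume_preserving_symm_measurableEquiv_toLp (Fin m)).measure_preimage
    (MeasurableSet.univ_pi fun i => measurableSet_Icc).nullMeasurableSet]
  rw [volume_pi_pi]
  have hstep : ∀ i : Fin m,
      volume (Set.Icc (-(if (i : ℕ) < d then (1:ℝ)/4 else δ)) (if (i : ℕ) < d then 1/4 else δ))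
        = ENNReal.ofReal (if (i : ℕ) < d then 1/2 else 2 * δ) := by
    intro i
    rw [Real.volume_Icc]
    congr 1
    split_ifs <;> ring
  rw [Finset.prod_congr rfl (fun i _ => hstep i)]
  rw [← ENNReal.ofReal_prod_of_nonneg (fun i _ => by split_ifs <;> [norm_num; positivity])]
  congr 1
  rw [Finset.prod_ite, Finset.prod_const, Finset.prod_const, card_filter_lt hdm]
  congr 2
  rw [Finset.filter_not, Finset.card_sdiff_of_subset (Finset.filter_subset _ _), card_filter_lt hdm,
    Finset.card_univ, Fintype.card_fin]

lemma volume_reg (m d : ℕ) (hdm : d ≤ m) {δ : ℝ} (hδ : 0 ≤ δ) :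
    volume (reg m d δ) = ENNReal.ofReal ((1/2) ^ d * (2 * δ) ^ (m - d) * (1/2)) := by
  rw [reg, MeasureTheory.Measure.volume_eq_prod, MeasureTheory.Measure.prod_prod,
    volume_regB m d hdm hδ, Real.volume_Icc]
  rw [← ENNReal.ofReal_mul (by positivity)]
  congr 1
  norm_num





/-- The test function. -/
def tf {m d : ℕ} (δ σ : ℝ) (E : Finset (Em m)) :
    Em m × Em m → ℝ := fun z =>
  (if z.1 ∈ E.filter (dirPred m d δ σ) then (1:ℝ) else 0) *
    (if z.2 ∈ E.filter (posPred m d δ) then (1:ℝ) else 0)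

lemma tf_nonneg {m d : ℕ} (δ σ : ℝ) (E : Finset (Em m)) :
    0 ≤ tf (m := m) (d := d) δ σ E := by
  intro z
  unfold tf
  positivity

lemma tf_support {m d : ℕ} (δ σ : ℝ) (E : Finset (Em m)) (ω i : Em m)
    (h : tf (m := m) (d := d) δ σ E (ω, i) ≠ 0) :
    ω ∈ E.filter (dirPred m d δ σ) ∧ i ∈ E := by
  unfold tf at h
  constructor
  · by_contra hc
    simp [hc] at h
  · by_contra hc
    have : i ∉ E.filter (posPred m d δ) := fun hmem => hc (Finset.mem_filter.mp hmem).1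
    simp [this] at h

/-- Pointwise lower bound for `Xstar` of the test function on the region. -/
lemma xstar_lower {m d : ℕ} (hdm : d ≤ m) {δ : ℝ} (hδ0 : 0 < δ) (hδ : δ ≤ 1/12)
    {E : Finset (Em m)} (hE : IsDeltaNet δ E) (σ : ℝ) (hσ : σ = 1 ∨ σ = -1)
    (x : Em m × ℝ) (hx : x ∈ reg m d δ) :
    ((E.filter (dirPred m d δ σ)).card : ℝ) ≤ Xstar δ E (tf (m := m) (d := d) δ σ E) x := by
  classical
  have hσa : |σ| = 1 := by rcases hσ with rfl | rfl <;> norm_num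
  obtain ⟨hx1, hx2⟩ := hx
  simp only [Set.mem_Icc] at hx2
  have hx2' : |x.2| ≤ 1/4 := abs_le.mpr ⟨by linarith [hx2.1], hx2.2⟩
  unfold Xstar
  have key : ∀ ω ∈ E.filter (dirPred m d δ σ),
      (1:ℝ) ≤ ∑ i ∈ E, tf (m := m) (d := d) δ σ E (ω, i) *
        Set.indicator (tube δ ω i) (fun _ => (1 : ℝ)) x := by
    intro ω hω
    obtain ⟨hωE, hωP⟩ := Finset.mem_filter.mp hω
    -- the point y = x.1 - x.2 • ω is in the cube
    set y : Em m := x.1 - x.2 • ω with hy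
    have hycube : y ∈ cube m := by
      intro i
      have hyi : y i = x.1 i - x.2 * ω i := rfl
      rw [hyi]
      have hxi := hx1 i
      by_cases hid : (i : ℕ) < d
      · rw [if_pos hid] at hxi
        have hωi : |ω i| ≤ 5/8 := by
          have := (hωP i).1 hid
          have habs : |σ * ω i| ≤ 5/8 := abs_le.mpr ⟨by linarith [this.1], this.2⟩
          rwa [abs_mul, hσa, one_mul] at habs
        calc |x.1 i - x.2 * ω i| ≤ |x.1 i| + |x.2 * ω i| := abs_sub _ _
          _ ≤ 1/4 + 1/4 * (5/8) := by
              rw [abs_mul]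
              have : |x.2| * |ω i| ≤ 1/4 * (5/8) :=
                mul_le_mul hx2' hωi (abs_nonneg _) (by norm_num)
              linarith
          _ ≤ 1 := by norm_num
      · rw [if_neg hid] at hxi
        have hωi : |ω i| ≤ δ := (hωP i).2 (le_of_not_gt hid)
        calc |x.1 i - x.2 * ω i| ≤ |x.1 i| + |x.2 * ω i| := abs_sub _ _
          _ ≤ δ + 1/4 * δ := by
              rw [abs_mul]
              have : |x.2| * |ω i| ≤ 1/4 * δ :=
                mul_le_mul hx2' hωi (abs_nonneg _) (by norm_num)
              linarith
          _ ≤ 1 := by linarith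
    obtain ⟨i₀, hi₀E, hi₀d⟩ := hE.2.1 y hycube
    have hi₀P : posPred m d δ i₀ := by
      intro i hi
      have hyi : |y i| ≤ 2 * δ := by
        have hyi' : y i = x.1 i - x.2 * ω i := rfl
        have hxi := hx1 i
        rw [if_neg (by omega)] at hxi
        have hωi : |ω i| ≤ δ := (hωP i).2 hi
        rw [hyi']
        calc |x.1 i - x.2 * ω i| ≤ |x.1 i| + |x.2 * ω i| := abs_sub _ _
          _ ≤ δ + 1/4 * δ := by
              rw [abs_mul]
              have : |x.2| * |ω i| ≤ 1/4 * δ :=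
                mul_le_mul hx2' hωi (abs_nonneg _) (by norm_num)
              linarith
          _ ≤ 2 * δ := by linarith
      have hco := coord_le_dist y i₀ i
      calc |i₀ i| = |y i + (i₀ i - y i)| := by congr 1; ring
        _ ≤ |y i| + |i₀ i - y i| := abs_add_le _ _
        _ ≤ 2 * δ + δ := by
            rw [abs_sub_comm] at hco
            have := hco.trans hi₀d
            linarith
        _ = 3 * δ := by ring
    have hmemtube : x ∈ tube δ ω i₀ := by
      constructor
      · linarith [hx2', abs_nonneg x.2]
      · have : x.1 - x.2 • ω - i₀ = y - i₀ := by rw [hy]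
        rw [this, ← dist_eq_norm]
        exact hi₀d
    have hterm : tf (m := m) (d := d) δ σ E (ω, i₀) *
        Set.indicator (tube δ ω i₀) (fun _ => (1 : ℝ)) x = 1 := by
      rw [Set.indicator_of_mem hmemtube]
      unfold tf
      rw [if_pos hω, if_pos (Finset.mem_filter.mpr ⟨hi₀E, hi₀P⟩)]
      norm_num
    calc (1:ℝ) = tf (m := m) (d := d) δ σ E (ω, i₀) *
          Set.indicator (tube δ ω i₀) (fun _ => (1 : ℝ)) x := hterm.symm
      _ ≤ _ := by
          apply Finset.single_le_sum (f := fun i => tf (m := m) (d := d) δ σ E (ω, i) *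
            Set.indicator (tube δ ω i) (fun _ => (1 : ℝ)) x) ?_ hi₀E
          intro i _
          apply mul_nonneg (tf_nonneg δ σ E _)
          exact Set.indicator_nonneg (fun _ _ => zero_le_one) x
  calc ((E.filter (dirPred m d δ σ)).card : ℝ)
      = ∑ _ω ∈ E.filter (dirPred m d δ σ), (1:ℝ) := by rw [Finset.sum_const]; simp
    _ ≤ ∑ ω ∈ E.filter (dirPred m d δ σ), ∑ i ∈ E, tf (m := m) (d := d) δ σ E (ω, i) *
          Set.indicator (tube δ ω i) (fun _ => (1 : ℝ)) x := Finset.sum_le_sum key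
    _ ≤ _ := by
        apply Finset.sum_le_sum_of_subset_of_nonneg (Finset.filter_subset _ _)
        intro ω _ _
        apply Finset.sum_nonneg
        intro i _
        apply mul_nonneg (tf_nonneg δ σ E _)
        exact Set.indicator_nonneg (fun _ _ => zero_le_one) x


lemma card_S_le {m d : ℕ} (hm : 1 ≤ m) (hdm : d ≤ m) {δ : ℝ} (hδ0 : 0 < δ) (hδ1 : δ ≤ 1)
    {E : Finset (Em m)} (hE : IsDeltaNet δ E) (σ : ℝ) (hσ : σ = 1 ∨ σ = -1) :
    ((E.filter (dirPred m d δ σ)).card : ℝ) ≤ (13 * Real.sqrt m) ^ m * (δ⁻¹) ^ d := by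
  apply sep_card_box hm hdm hδ0 hδ1 _
    (fun i => if (i : ℕ) < d then min (σ * (1/8)) (σ * (5/8)) else -δ)
    (fun i => if (i : ℕ) < d then max (σ * (1/8)) (σ * (5/8)) else δ)
  · intro i
    split_ifs
    · exact min_le_max
    · linarith
  · intro i hid
    rw [if_pos hid, if_pos hid]
    rcases hσ with rfl | rfl <;> norm_num
  · intro i hid
    rw [if_neg (by omega), if_neg (by omega)]
    linarith
  · intro e he i
    obtain ⟨heE, heP⟩ := Finset.mem_filter.mp he
    by_cases hid : (i : ℕ) < d
    · rw [if_pos hid, if_pos hid]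
      have h18 := (heP i).1 hid
      rcases hσ with rfl | rfl
      · constructor
        · have hh : min ((1:ℝ) * (1/8)) (1 * (5/8)) = 1/8 := by norm_num
          rw [hh]; linarith [h18.1]
        · have hh : max ((1:ℝ) * (1/8)) (1 * (5/8)) = 5/8 := by norm_num
          rw [hh]; linarith [h18.2]
      · constructor
        · have hh : min ((-1:ℝ) * (1/8)) ((-1) * (5/8)) = -(5/8) := by norm_num
          rw [hh]; nlinarith [h18.2]
        · have hh : max ((-1:ℝ) * (1/8)) ((-1) * (5/8)) = -(1/8) := by norm_num
          rw [hh]; nlinarith [h18.1]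
    · rw [if_neg hid, if_neg hid]
      have := (heP i).2 (le_of_not_gt hid)
      exact abs_le.mp this
  · intro e₁ h₁ e₂ h₂ hne
    exact hE.2.2 e₁ (Finset.filter_subset _ _ h₁) e₂ (Finset.filter_subset _ _ h₂) hne

lemma card_P_le {m d : ℕ} (hm : 1 ≤ m) (hdm : d ≤ m) {δ : ℝ} (hδ0 : 0 < δ) (hδ1 : δ ≤ 1)
    {E : Finset (Em m)} (hE : IsDeltaNet δ E) :
    ((E.filter (posPred m d δ)).card : ℝ) ≤ (13 * Real.sqrt m) ^ m * (δ⁻¹) ^ d := by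
  apply sep_card_box hm hdm hδ0 hδ1 _
    (fun i => if (i : ℕ) < d then -1 else -(3*δ))
    (fun i => if (i : ℕ) < d then 1 else 3*δ)
  · intro i
    split_ifs
    · norm_num
    · linarith
  · intro i hid
    rw [if_pos hid, if_pos hid]
    norm_num
  · intro i hid
    rw [if_neg (by omega), if_neg (by omega)]
    linarith
  · intro e he i
    obtain ⟨heE, heP⟩ := Finset.mem_filter.mp he
    by_cases hid : (i : ℕ) < d
    · rw [if_pos hid, if_pos hid]
      exact abs_le.mp (hE.1 heE i)
    · rw [if_neg hid, if_neg hid]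
      exact abs_le.mp (heP i (le_of_not_gt hid))
  · intro e₁ h₁ e₂ h₂ hne
    exact hE.2.2 e₁ (Finset.filter_subset _ _ h₁) e₂ (Finset.filter_subset _ _ h₂) hne

lemma mixedNorm_tf_le {m d : ℕ} (hm : 1 ≤ m) (hdm : d ≤ m) {δ : ℝ} (hδ0 : 0 < δ) (hδ1 : δ ≤ 1)
    {E : Finset (Em m)} (hE : IsDeltaNet δ E) (σ : ℝ) (hσ : σ = 1 ∨ σ = -1)
    (a : ℝ) (ha : a = 0 ∨ 1 ≤ a) :
    mixedNorm E δ a (tf (m := m) (d := d) δ σ E) ≤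
      ((13 * Real.sqrt m) ^ m * (δ⁻¹) ^ d * δ ^ (m : ℝ)) ^ (1/a) *
        ((13 * Real.sqrt m) ^ m * (δ⁻¹) ^ d) := by
  classical
  set S := E.filter (dirPred m d δ σ) with hS
  set P := E.filter (posPred m d δ) with hP
  set B : ℝ := (13 * Real.sqrt m) ^ m * (δ⁻¹) ^ d with hB
  have hB0 : 0 < B := by
    rw [hB]
    have hsm : (1 : ℝ) ≤ Real.sqrt m := by
      rw [show (1:ℝ) = Real.sqrt 1 by simp]
      exact Real.sqrt_le_sqrt (by exact_mod_cast hm)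
    positivity
  have hB1 : 1 ≤ B := by
    rw [hB]
    have hsm : (1 : ℝ) ≤ Real.sqrt m := by
      rw [show (1:ℝ) = Real.sqrt 1 by simp]
      exact Real.sqrt_le_sqrt (by exact_mod_cast hm)
    have h1 : (1:ℝ) ≤ (13 * Real.sqrt m) ^ m := one_le_pow₀ (by linarith)
    have h2 : (1:ℝ) ≤ (δ⁻¹) ^ d := one_le_pow₀ ((one_le_inv_iff₀).mpr ⟨hδ0, hδ1⟩)
    nlinarith
  have hNS : ((S.card : ℕ) : ℝ) ≤ B := card_S_le hm hdm hδ0 hδ1 hE σ hσ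
  have hNP : ((P.card : ℕ) : ℝ) ≤ B := card_P_le hm hdm hδ0 hδ1 hE
  have hsum : ∀ ω ∈ E, (∑ i ∈ E, tf (m := m) (d := d) δ σ E (ω, i))
      = (if ω ∈ S then (1:ℝ) else 0) * (P.card : ℝ) := by
    intro ω _
    unfold tf
    dsimp only
    refine (Finset.mul_sum E (fun i => if i ∈ E.filter (posPred m d δ) then (1:ℝ) else 0)
      (if ω ∈ E.filter (dirPred m d δ σ) then (1:ℝ) else 0)).symm.trans ?_
    congr 1
    rw [← hP]
    rw [show (∑ i ∈ E, if i ∈ P then (1:ℝ) else 0) = ∑ i ∈ E ∩ P, (1:ℝ) from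
      Finset.sum_ite_mem E P (fun _ => (1:ℝ))]
    rw [Finset.inter_eq_right.mpr (Finset.filter_subset _ _), Finset.sum_const, nsmul_eq_mul,
      mul_one]
  unfold mixedNorm
  rw [Finset.sum_congr rfl (fun ω hω => by rw [hsum ω hω])]
  rcases ha with rfl | ha1
  · simp only [Real.rpow_zero]
    rw [show (1:ℝ)/0 = 0 by norm_num]
    simp only [Real.rpow_zero, one_mul]
    exact hB1
  · have ha0 : a ≠ 0 := by linarith
    have ha0' : 0 < a := by linarith
    have hterm : ∀ ω ∈ E, δ ^ (m : ℝ) * ((if ω ∈ S then (1:ℝ) else 0) * (P.card : ℝ)) ^ a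
        = if ω ∈ S then δ ^ (m : ℝ) * ((P.card : ℝ)) ^ a else 0 := by
      intro ω _
      split_ifs with hωS
      · rw [one_mul]
      · rw [zero_mul, Real.zero_rpow ha0, mul_zero]
    rw [Finset.sum_congr rfl hterm]
    rw [Finset.sum_ite_mem E S (fun _ => δ ^ (m : ℝ) * ((P.card : ℝ)) ^ a)]
    rw [Finset.inter_eq_right.mpr (Finset.filter_subset _ _), Finset.sum_const, nsmul_eq_mul]
    have hbase : (S.card : ℝ) * (δ ^ (m : ℝ) * ((P.card : ℝ)) ^ a)
        ≤ B * (δ ^ (m : ℝ) * B ^ a) := by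
      have h1 : ((P.card : ℝ)) ^ a ≤ B ^ a :=
        Real.rpow_le_rpow (Nat.cast_nonneg _) hNP ha0'.le
      have hd0 : (0:ℝ) ≤ δ ^ (m : ℝ) := Real.rpow_nonneg hδ0.le _
      have h2 : δ ^ (m : ℝ) * ((P.card : ℝ)) ^ a ≤ δ ^ (m : ℝ) * B ^ a := by
        apply mul_le_mul_of_nonneg_left h1 hd0
      calc (S.card : ℝ) * (δ ^ (m : ℝ) * ((P.card : ℝ)) ^ a)
          ≤ B * (δ ^ (m : ℝ) * ((P.card : ℝ)) ^ a) := by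
            apply mul_le_mul_of_nonneg_right hNS
            positivity
        _ ≤ B * (δ ^ (m : ℝ) * B ^ a) := by
            apply mul_le_mul_of_nonneg_left h2 hB0.le
    calc ((S.card : ℝ) * (δ ^ (m : ℝ) * ((P.card : ℝ)) ^ a)) ^ ((1:ℝ)/a)
        ≤ (B * (δ ^ (m : ℝ) * B ^ a)) ^ ((1:ℝ)/a) := by
          apply Real.rpow_le_rpow ?_ hbase (by positivity)
          positivity
      _ = (B * δ ^ (m : ℝ)) ^ ((1:ℝ)/a) * B := by
          rw [show B * (δ ^ (m : ℝ) * B ^ a) = (B * δ ^ (m : ℝ)) * B ^ a by ring]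
          rw [Real.mul_rpow (by positivity) (by positivity)]
          congr 1
          rw [← Real.rpow_mul hB0.le, mul_one_div_cancel ha0, Real.rpow_one]
      _ = _ := by rw [hB]

lemma eLpNorm_ge {α : Type*} [MeasurableSpace α] (μ : Measure α) (b : ℝ) (hb : 0 < b)
    (F : α → ℝ) (Rg : Set α) (hRg : MeasurableSet Rg) (c : ℝ) (hc : 0 ≤ c)
    (hFc : ∀ x ∈ Rg, c ≤ F x) :
    ENNReal.ofReal c * (μ Rg) ^ ((1:ℝ)/b) ≤ eLpNorm F (ENNReal.ofReal b) μ := by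
  have h0 : ENNReal.ofReal b ≠ 0 := (ENNReal.ofReal_pos.mpr hb).ne'
  rw [eLpNorm_eq_lintegral_rpow_enorm_toReal h0 ENNReal.ofReal_ne_top]
  rw [ENNReal.toReal_ofReal hb.le]
  have hpt : ∀ x, Rg.indicator (fun _ => ENNReal.ofReal c ^ b) x ≤ ‖F x‖ₑ ^ b := by
    intro x
    by_cases hx : x ∈ Rg
    · rw [Set.indicator_of_mem hx]
      apply ENNReal.rpow_le_rpow ?_ hb.le
      rw [Real.enorm_eq_ofReal (hc.trans (hFc x hx))]
      exact ENNReal.ofReal_le_ofReal (hFc x hx)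
    · rw [Set.indicator_of_notMem hx]
      positivity
  have hint := lintegral_mono (μ := μ) hpt
  rw [lintegral_indicator hRg, setLIntegral_const] at hint
  calc ENNReal.ofReal c * μ Rg ^ ((1:ℝ)/b)
      = ((ENNReal.ofReal c ^ b) * μ Rg) ^ ((1:ℝ)/b) := by
        rw [ENNReal.mul_rpow_of_nonneg _ _ (by positivity)]
        congr 1
        rw [← ENNReal.rpow_mul, mul_one_div_cancel hb.ne', ENNReal.rpow_one]
    _ ≤ _ := ENNReal.rpow_le_rpow hint (by positivity)

lemma exp_of_asymp {A B δ₀ : ℝ} (hδ₀ : 0 < δ₀)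
    (H : ∀ ε : ℝ, 0 < ε → ∃ C : ℝ, 0 < C ∧ ∀ δ : ℝ, 0 < δ → δ ≤ δ₀ → δ ^ A ≤ C * δ ^ (B - ε)) :
    B ≤ A := by
  by_contra hAB
  push_neg at hAB
  set e := (B - A) / 2 with he
  have he0 : 0 < e := by rw [he]; linarith
  obtain ⟨C, hC0, hC⟩ := H e he0
  set δ := min δ₀ ((1 / (2 * C)) ^ ((1:ℝ) / e) : ℝ) with hδdef
  have hδ0 : 0 < δ := lt_min hδ₀ (Real.rpow_pos_of_pos (by positivity) _)
  have hmain := hC δ hδ0 (min_le_left _ _)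
  have hBe : B - e = A + e := by rw [he]; ring
  rw [hBe, Real.rpow_add hδ0] at hmain
  have hδA : 0 < δ ^ A := Real.rpow_pos_of_pos hδ0 _
  have h1 : 1 ≤ C * δ ^ e := by
    rw [show C * (δ ^ A * δ ^ e) = (C * δ ^ e) * δ ^ A by ring] at hmain
    exact (le_mul_iff_one_le_left hδA).mp hmain
  have h2 : δ ^ e ≤ 1 / (2 * C) := by
    have hδle : δ ≤ (1 / (2 * C)) ^ ((1:ℝ) / e) := min_le_right _ _
    calc δ ^ e ≤ ((1 / (2 * C)) ^ ((1:ℝ) / e)) ^ e :=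
          Real.rpow_le_rpow hδ0.le hδle he0.le
      _ = (1 / (2 * C)) ^ (((1:ℝ)/e) * e) := (Real.rpow_mul (by positivity) _ _).symm
      _ = 1 / (2 * C) := by
          rw [one_div_mul_cancel he0.ne', Real.rpow_one]
  have h3 : C * (1/(2*C)) = 1/2 := by field_simp
  have h4 := mul_le_mul_of_nonneg_left h2 hC0.le
  linarith




lemma mixedNorm_nonneg {m : ℕ} (E : Finset (Em m)) (δ a : ℝ) (hδ : 0 ≤ δ)
    (g : Em m × Em m → ℝ) (hg : 0 ≤ g) : 0 ≤ mixedNorm E δ a g := by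
  unfold mixedNorm
  apply Real.rpow_nonneg
  apply Finset.sum_nonneg
  intro ω _
  exact mul_nonneg (Real.rpow_nonneg hδ _)
    (Real.rpow_nonneg (Finset.sum_nonneg fun i _ => hg (ω, i)) _)

lemma keyineq (m d : ℕ) (hm : 1 ≤ m) (hd : 1 ≤ d) (hdm : d ≤ m) (a b : ℝ)
    (ha : a = 0 ∨ 1 ≤ a) (hb : 0 < b) (hK : KBil m a b) :
    (2 - 2 * ((m:ℝ)+1) + ((m:ℝ)+1)/b) + 2*((((m:ℝ)-(d:ℝ)))*(1/a)) - 2*(d:ℝ)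
      ≤ -2*(d:ℝ) + (((m:ℝ)-(d:ℝ)))*(1/b) := by
  classical
  have hsm : (1 : ℝ) ≤ Real.sqrt m := by
    rw [show (1:ℝ) = Real.sqrt 1 by simp]
    exact Real.sqrt_le_sqrt (by exact_mod_cast hm)
  set u : ℝ := (m:ℝ) - (d:ℝ) with hu
  set CM : ℝ := (13 * Real.sqrt m) ^ m with hCM
  have hCM0 : 0 < CM := by rw [hCM]; positivity
  set cv : ℝ := (1/2:ℝ)^d * 2^(m-d) * (1/2) with hcv
  have hcv0 : 0 < cv := by rw [hcv]; positivity
  set cL : ℝ := (24:ℝ)⁻¹^d * (24:ℝ)⁻¹^d * cv^((1:ℝ)/b) with hcL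
  have hcL0 : 0 < cL := by rw [hcL]; positivity
  set cR : ℝ := (CM^((1:ℝ)/a) * CM) * (CM^((1:ℝ)/a) * CM) with hcR
  have hcR0 : 0 < cR := by rw [hcR]; positivity
  apply exp_of_asymp (δ₀ := 1/12) (by norm_num)
  intro ε hε
  obtain ⟨C, hC0, hCb⟩ := hK (1/4) (by norm_num) ε hε
  refine ⟨C * cR / cL, by positivity, ?_⟩
  intro δ hδ0 hδ12
  have hδ1 : δ ≤ 1 := by linarith
  have hδlt1 : δ < 1 := by linarith
  obtain ⟨E, hE⟩ := exists_deltaNet hm δ hδ0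
  set S₁ := E.filter (dirPred m d δ 1) with hS₁
  set S₂ := E.filter (dirPred m d δ (-1)) with hS₂
  set f := tf (m := m) (d := d) δ 1 E with hf
  set g := tf (m := m) (d := d) δ (-1) E with hg
  have hsep : ∀ x ∈ S₁, ∀ y ∈ S₂, (1/4:ℝ) ≤ dist x y := by
    intro x hx y hy
    obtain ⟨hxE, hxP⟩ := Finset.mem_filter.mp hx
    obtain ⟨hyE, hyP⟩ := Finset.mem_filter.mp hy
    have hi0 : (0:ℕ) < m := by omega
    set i0 : Fin m := ⟨0, hi0⟩ with hi0d
    have h1 := (hxP i0).1 hd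
    have h2 := (hyP i0).1 hd
    have hco := coord_le_dist x y i0
    have hle : (1/4:ℝ) ≤ x i0 - y i0 := by
      have := h1.1
      have := h2.1
      nlinarith [h1.1, h2.1]
    linarith [le_abs_self (x i0 - y i0)]
  have happ := hCb δ hδ0 hδlt1 E hE S₁ S₂ (Finset.filter_subset _ _) (Finset.filter_subset _ _)
      hsep f g (tf_nonneg _ _ _) (tf_nonneg _ _ _)
      (fun ω i h => tf_support _ _ _ _ _ h) (fun ω i h => tf_support _ _ _ _ _ h)
  set N₁ : ℝ := (S₁.card : ℝ) with hN₁
  set N₂ : ℝ := (S₂.card : ℝ) with hN₂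
  have hN₁L : ((24*δ)⁻¹)^d ≤ N₁ := net_lower hd hdm hδ0 hδ12 hE 1 (Or.inl rfl)
  have hN₂L : ((24*δ)⁻¹)^d ≤ N₂ := net_lower hd hdm hδ0 hδ12 hE (-1) (Or.inr rfl)
  have hL0 : (0:ℝ) ≤ ((24*δ)⁻¹)^d := by positivity
  have hN₁0 : (0:ℝ) ≤ N₁ := le_trans hL0 hN₁L
  have hN₂0 : (0:ℝ) ≤ N₂ := le_trans hL0 hN₂L
  have hlow : ∀ x ∈ reg m d δ, N₁ * N₂ ≤ Xstar δ E f x * Xstar δ E g x := by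
    intro x hx
    have h1 := xstar_lower hdm hδ0 hδ12 hE 1 (Or.inl rfl) x hx
    have h2 := xstar_lower hdm hδ0 hδ12 hE (-1) (Or.inr rfl) x hx
    exact mul_le_mul h1 h2 hN₂0 (le_trans hN₁0 h1)
  have hL := eLpNorm_ge volume b hb (fun x => Xstar δ E f x * Xstar δ E g x)
      (reg m d δ) (measurable_reg m d δ) (N₁ * N₂) (mul_nonneg hN₁0 hN₂0) hlow
  set vR : ℝ := (1/2:ℝ)^d * (2*δ)^(m-d) * (1/2) with hvR
  have hvR0 : 0 < vR := by rw [hvR]; positivity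
  have hvol := volume_reg m d hdm hδ0.le
  have hL2 : ENNReal.ofReal ((N₁ * N₂) * vR ^ ((1:ℝ)/b)) ≤
      eLpNorm (fun x => Xstar δ E f x * Xstar δ E g x) (ENNReal.ofReal b) volume := by
    rw [ENNReal.ofReal_mul (mul_nonneg hN₁0 hN₂0)]
    rw [← ENNReal.ofReal_rpow_of_pos hvR0]
    rw [← hvR] at hvol
    rw [← hvol]
    exact hL
  have hmn₁0 : 0 ≤ mixedNorm E δ a f := mixedNorm_nonneg E δ a hδ0.le f (tf_nonneg _ _ _)
  have hmn₂0 : 0 ≤ mixedNorm E δ a g := mixedNorm_nonneg E δ a hδ0.le g (tf_nonneg _ _ _)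
  have hRHS0 : 0 ≤ C * δ ^ (-ε) * δ ^ (2 - 2 * ((m : ℝ) + 1) + ((m : ℝ) + 1) / b) *
      mixedNorm E δ a f * mixedNorm E δ a g := by positivity
  have hreal : (N₁ * N₂) * vR ^ ((1:ℝ)/b) ≤
      C * δ ^ (-ε) * δ ^ (2 - 2 * ((m : ℝ) + 1) + ((m : ℝ) + 1) / b) *
        mixedNorm E δ a f * mixedNorm E δ a g :=
    (ENNReal.ofReal_le_ofReal_iff hRHS0).mp (hL2.trans happ)
  -- lower bound for the left side in terms of powers of δ
  have hdinv : (δ⁻¹)^d = δ ^ (-(d:ℝ)) := by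
    rw [inv_pow, ← Real.rpow_natCast δ d, ← Real.rpow_neg hδ0.le]
  have hLd : ((24*δ)⁻¹)^d = (24:ℝ)⁻¹^d * δ ^ (-(d:ℝ)) := by
    rw [mul_inv, mul_pow, hdinv]
  have hvRr : vR ^ ((1:ℝ)/b) = cv^((1:ℝ)/b) * δ ^ (u*(1/b)) := by
    have h1 : vR = cv * δ^(m-d) := by rw [hvR, hcv, mul_pow]; ring
    rw [h1, Real.mul_rpow hcv0.le (by positivity)]
    congr 1
    rw [← Real.rpow_natCast δ (m-d), ← Real.rpow_mul hδ0.le]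
    congr 1
    rw [Nat.cast_sub hdm, hu]
  have hA : δ ^ (-2*(d:ℝ) + u*(1/b)) = δ ^ (-(d:ℝ)) * δ ^ (-(d:ℝ)) * δ ^ (u*(1/b)) := by
    rw [show -2*(d:ℝ) + u*(1/b) = (-(d:ℝ)) + (-(d:ℝ)) + (u*(1/b)) by ring,
      Real.rpow_add hδ0, Real.rpow_add hδ0]
  have hLHSge : cL * δ ^ (-2*(d:ℝ) + u*(1/b)) ≤ (N₁ * N₂) * vR ^ ((1:ℝ)/b) := by
    calc cL * δ ^ (-2*(d:ℝ) + u*(1/b))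
        = (((24:ℝ)⁻¹^d * δ ^ (-(d:ℝ))) * ((24:ℝ)⁻¹^d * δ ^ (-(d:ℝ)))) *
            (cv^((1:ℝ)/b) * δ ^ (u*(1/b))) := by rw [hA, hcL]; ring
      _ = (((24*δ)⁻¹)^d * ((24*δ)⁻¹)^d) * vR ^ ((1:ℝ)/b) := by rw [hLd, hvRr]
      _ ≤ (N₁ * N₂) * vR ^ ((1:ℝ)/b) := by
          apply mul_le_mul_of_nonneg_right ?_ (by positivity)
          exact mul_le_mul hN₁L hN₂L hL0 hN₁0
  -- upper bound for the right side
  have hmNf : mixedNorm E δ a f ≤ CM^((1:ℝ)/a) * δ ^ (u*(1/a)) * (CM * δ ^ (-(d:ℝ))) := by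
    have h1 := mixedNorm_tf_le hm hdm hδ0 hδ1 hE 1 (Or.inl rfl) a ha
    rw [← hf, ← hCM] at h1
    refine h1.trans (le_of_eq ?_)
    rw [hdinv]
    have h2 : CM * δ ^ (-(d:ℝ)) * δ ^ ((m:ℕ):ℝ) = CM * δ ^ u := by
      rw [mul_assoc, ← Real.rpow_add hδ0]
      congr 2
      rw [hu]; push_cast; ring
    rw [h2, Real.mul_rpow hCM0.le (Real.rpow_nonneg hδ0.le _), ← Real.rpow_mul hδ0.le]
  have hmNg : mixedNorm E δ a g ≤ CM^((1:ℝ)/a) * δ ^ (u*(1/a)) * (CM * δ ^ (-(d:ℝ))) := by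
    have h1 := mixedNorm_tf_le hm hdm hδ0 hδ1 hE (-1) (Or.inr rfl) a ha
    rw [← hg, ← hCM] at h1
    refine h1.trans (le_of_eq ?_)
    rw [hdinv]
    have h2 : CM * δ ^ (-(d:ℝ)) * δ ^ ((m:ℕ):ℝ) = CM * δ ^ u := by
      rw [mul_assoc, ← Real.rpow_add hδ0]
      congr 2
      rw [hu]; push_cast; ring
    rw [h2, Real.mul_rpow hCM0.le (Real.rpow_nonneg hδ0.le _), ← Real.rpow_mul hδ0.le]
  set B : ℝ := (2 - 2 * ((m:ℝ)+1) + ((m:ℝ)+1)/b) + 2*(u*(1/a)) - 2*(d:ℝ) with hB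
  have hRHSle : C * δ ^ (-ε) * δ ^ (2 - 2 * ((m : ℝ) + 1) + ((m : ℝ) + 1) / b) *
      mixedNorm E δ a f * mixedNorm E δ a g ≤ (C * cR) * δ ^ (B - ε) := by
    have hUB0 : (0:ℝ) ≤ CM^((1:ℝ)/a) * δ ^ (u*(1/a)) * (CM * δ ^ (-(d:ℝ))) := by positivity
    have hpref : (0:ℝ) ≤ C * δ ^ (-ε) * δ ^ (2 - 2 * ((m : ℝ) + 1) + ((m : ℝ) + 1) / b) := by
      positivity
    calc C * δ ^ (-ε) * δ ^ (2 - 2 * ((m : ℝ) + 1) + ((m : ℝ) + 1) / b) *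
          mixedNorm E δ a f * mixedNorm E δ a g
        ≤ C * δ ^ (-ε) * δ ^ (2 - 2 * ((m : ℝ) + 1) + ((m : ℝ) + 1) / b) *
            (CM^((1:ℝ)/a) * δ ^ (u*(1/a)) * (CM * δ ^ (-(d:ℝ)))) *
            (CM^((1:ℝ)/a) * δ ^ (u*(1/a)) * (CM * δ ^ (-(d:ℝ)))) := by
          apply mul_le_mul ?_ hmNg hmn₂0 (by positivity)
          exact mul_le_mul_of_nonneg_left hmNf hpref
      _ = (C * cR) * δ ^ (B - ε) := by
          have hsplit : δ ^ (B - ε) = δ^(-ε) * δ^(2 - 2*((m:ℝ)+1) + ((m:ℝ)+1)/b) *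
              δ^(u*(1/a)) * δ^(-(d:ℝ)) * δ^(u*(1/a)) * δ^(-(d:ℝ)) := by
            rw [← Real.rpow_add hδ0, ← Real.rpow_add hδ0, ← Real.rpow_add hδ0,
              ← Real.rpow_add hδ0, ← Real.rpow_add hδ0]
            congr 1
            rw [hB]; ring
          rw [hsplit, hcR]
          generalize δ ^ (-ε) = X1
          generalize δ ^ (2 - 2*((m:ℝ)+1) + ((m:ℝ)+1)/b) = X2
          generalize δ ^ (u*(1/a)) = X3
          generalize δ ^ (-(d:ℝ)) = X4
          generalize CM ^ ((1:ℝ)/a) = Y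
          ring
  have hchain : cL * δ ^ (-2*(d:ℝ) + u*(1/b)) ≤ (C * cR) * δ ^ (B - ε) :=
    hLHSge.trans (hreal.trans hRHSle)
  rw [div_mul_eq_mul_div, le_div_iff₀ hcL0]
  calc δ ^ (-2*(d:ℝ) + u*(1/b)) * cL = cL * δ ^ (-2*(d:ℝ) + u*(1/b)) := by ring
    _ ≤ (C * cR) * δ ^ (B - ε) := hchain
    _ = C * cR * δ ^ (B - ε) := by ring

end Nec

end



theorem stmt10 (n : ℕ) (hn : 2 ≤ n) (p q : ℝ) (hp : 1 ≤ p) (hq : 1 ≤ q)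
    (h : KBil (n - 1) (q / (q - 1)) (p / (p - 1) / 2)) :
    p ≤ (n : ℝ) ∧ 1 ≤ ((n : ℝ) - 2) / q + 2 / p := by
  have hn2 : (2:ℝ) ≤ (n:ℝ) := by exact_mod_cast hn
  rcases le_or_gt p 2 with hp2 | hp2
  · constructor
    · linarith
    · have h1 : (0:ℝ) ≤ ((n:ℝ)-2)/q := div_nonneg (by linarith) (by linarith)
      have h2 : (1:ℝ) ≤ 2/p := by
        rw [le_div_iff₀ (by linarith)]
        linarith
      linarith
  · set m := n - 1 with hm'
    have hm : 1 ≤ m := by omega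
    have hnm : (n:ℝ) = (m:ℝ) + 1 := by
      have hnn : n = m + 1 := by omega
      rw [hnn]; push_cast; ring
    set a := q / (q - 1) with haq
    set b := p / (p - 1) / 2 with hbp
    have hp1 : (0:ℝ) < p - 1 := by linarith
    have hp0 : (0:ℝ) < p := by linarith
    have hq0 : (0:ℝ) < q := by linarith
    have hb0 : 0 < b := by rw [hbp]; positivity
    have hpne : p ≠ 0 := ne_of_gt hp0
    have hp1ne : p - 1 ≠ 0 := ne_of_gt hp1
    have hbinv : 1/b = 2 - 2/p := by
      rw [hbp]
      field_simp
    have ha : a = 0 ∨ 1 ≤ a := by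
      rcases eq_or_lt_of_le hq with hq1 | hq1
      · left; rw [haq, ← hq1]; norm_num
      · right
        rw [haq, le_div_iff₀ (by linarith)]
        linarith
    have hainv : 1/a = 1 - 1/q := by
      rcases eq_or_lt_of_le hq with hq1 | hq1
      · rw [haq, ← hq1]; norm_num
      · rw [haq, one_div_div, sub_div, div_self (ne_of_gt hq0)]
    have hK : KBil m a b := h
    have key1 := Nec.keyineq m m hm hm le_rfl a b ha hb0 hK
    have key2 := Nec.keyineq m 1 hm le_rfl hm a b ha hb0 hK
    constructor
    · have e1 : ((m:ℝ)-(m:ℝ))*(1/a) = 0 := by ring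
      have e2 : ((m:ℝ)-(m:ℝ))*(1/b) = 0 := by ring
      have hκ : 2 - 2*((m:ℝ)+1) + ((m:ℝ)+1)/b ≤ 0 := by linarith [key1]
      rw [div_eq_mul_one_div ((m:ℝ)+1) b, hbinv] at hκ
      rw [hnm]
      refine (one_le_div hp0).mp ?_
      have hexp : ((m:ℝ)+1)*(2 - 2/p) = 2*((m:ℝ)+1) - 2*(((m:ℝ)+1)/p) := by ring
      have h2p : 2 - 2*(((m:ℝ)+1)/p) ≤ 0 := by linarith [hκ, hexp]
      linarith [h2p]
    · rw [div_eq_mul_one_div ((m:ℝ)+1) b, hainv, hbinv] at key2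
      push_cast at key2
      rw [hnm]
      have hgoal : ((m:ℝ)+1-2)/q + 2/p = ((m:ℝ)-1)*(1/q) + 2/p := by
        rw [div_eq_mul_one_div ((m:ℝ)+1-2) q]
        ring
      rw [hgoal]
      -- key2 : 2 - 2(m+1) + (m+1)(2-2/p) + 2((m-1)(1-1/q)) - 2 ≤ -2 + (m-1)(2-2/p)
      have h2p : 2/p = 2*(1/p) := by rw [div_eq_mul_one_div]
      rw [h2p] at key2 ⊢
      ring_nf at key2 ⊢
      linarith [key2]
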